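/- arXiv:2305.03656 — 2 statements merged into one kernel-verified Lean document; each statement's English description precedes it below -/
import Mathlib

section
/- Let (M,d) be a metric space and X, Y ⊆ M. Assume there exists a ∈ (0,∞) such that for each ρ ∈ (0,a) and each x' ∈ X there exists x'' ∈ X with d(x',x'') = ρ. Let υ_Y ∈ (0,∞), β ∈ (0,1], s₂ ∈ [β,∞), s₃ ∈ (0,1], with s₂ − β > υ_Y and s₂ < υ_Y + β + s₃. Let ν be a measure on a σ-algebra of subsets of Y containing the Borel subsets of Y, with ν(B(x,r) ∩ Y) < ∞ for all x ∈ X and r > 0, and ν(Y) < ∞. Let Y be upper υ_Y-Ahlfors regular with respect to X and let Z ∈ 𝒦_{υ_Y,s₂,s₃}(X×Y). If there exists C > 0 such that for every g ∈ C^{0,β}(X∪Y) the function Q[Z,g,1] is bounded and min{β, υ_Y+s₃+β−s₂}-Hölder continuous on X with sup-norm plus Hölder seminorm at most C·|g|_β, then sup over x ∈ X and r ∈ (0, e^{−1/s₃}) of |∫_{Y\B(x,r)} Z(x,y) dν(y)| · r^β / max{r^β, r^{υ_Y+s₃+β−s₂}} is finite. -/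
open MeasureTheory Metric Set
open scoped ENNReal

noncomputable section

variable {M : Type*} [MetricSpace M] [MeasurableSpace M] [BorelSpace M]

/-- `Y` is upper `υ`-Ahlfors regular with respect to `X`:
there exist `r₀ ∈ (0,∞]` and `c > 0` with `ν (B(x,r) ∩ Y) ≤ c rᵘ` for `x ∈ X`, `0 < r < r₀`. -/
def UpperAhlforsRegular (ν : Measure M) (X Y : Set M) (υ : ℝ) : Prop :=
  ∃ c : ℝ, 0 < c ∧ ∃ r₀ : ℝ≥0∞, 0 < r₀ ∧
    ∀ x ∈ X, ∀ r : ℝ, 0 < r → ENNReal.ofReal r < r₀ →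
      ν (ball x r ∩ Y) ≤ ENNReal.ofReal (c * r ^ υ)

/-- `Y` is strongly upper `υ`-Ahlfors regular with respect to `X`. -/
def StronglyUpperAhlforsRegular (ν : Measure M) (X Y : Set M) (υ : ℝ) : Prop :=
  ∃ c : ℝ, 0 < c ∧ ∃ r₀ : ℝ≥0∞, 0 < r₀ ∧
    ∀ x ∈ X, ∀ r₁ r₂ : ℝ, 0 ≤ r₁ → r₁ < r₂ → ENNReal.ofReal r₂ < r₀ →
      ν ((ball x r₂ \ ball x r₁) ∩ Y) ≤ ENNReal.ofReal (c * (r₂ ^ υ - r₁ ^ υ))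

/-- the set of values `d(x,y)^{s₁} |K(x,y)|`, `x ∈ X`, `y ∈ Y`, `x ≠ y`. -/
def kernelSet₁ (X Y : Set M) (s₁ : ℝ) (K : M → M → ℂ) : Set ℝ :=
  {t | ∃ x ∈ X, ∃ y ∈ Y, x ≠ y ∧ t = dist x y ^ s₁ * ‖K x y‖}

/-- the set of values `(d(x',y)^{s₂}/d(x',x'')^{s₃}) |K(x',y) - K(x'',y)|`,
`x', x'' ∈ X`, `x' ≠ x''`, `y ∈ Y \ B(x', 2 d(x',x''))`. -/
def kernelSet₂ (X Y : Set M) (s₂ s₃ : ℝ) (K : M → M → ℂ) : Set ℝ :=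
  {t | ∃ x' ∈ X, ∃ x'' ∈ X, x' ≠ x'' ∧ ∃ y ∈ Y \ ball x' (2 * dist x' x''),
        t = dist x' y ^ s₂ / dist x' x'' ^ s₃ * ‖K x' y - K x'' y‖}

/-- membership in the kernel class `𝒦_{s₁,s₂,s₃}(X×Y)`: continuity off the diagonal
together with finiteness of the two suprema defining the norm. -/
def MemK (X Y : Set M) (s₁ s₂ s₃ : ℝ) (K : M → M → ℂ) : Prop :=
  ContinuousOn (fun p : M × M => K p.1 p.2) ((X ×ˢ Y) \ {p : M × M | p.1 = p.2}) ∧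
  BddAbove (kernelSet₁ X Y s₁ K) ∧ BddAbove (kernelSet₂ X Y s₂ s₃ K)

/-- the norm `‖K‖` of the class `𝒦_{s₁,s₂,s₃}(X×Y)`. -/
def kNorm (X Y : Set M) (s₁ s₂ s₃ : ℝ) (K : M → M → ℂ) : ℝ :=
  sSup (kernelSet₁ X Y s₁ K) + sSup (kernelSet₂ X Y s₂ s₃ K)

/-- the set of values `|∫_{Y \ B(x,r)} K(x,y) dν(y)|`, `x ∈ X`, `r > 0`
(the maximal function values). -/
def maxFunSet (ν : Measure M) (X Y : Set M) (K : M → M → ℂ) : Set ℝ :=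
  {t | ∃ x ∈ X, ∃ r : ℝ, 0 < r ∧ t = ‖∫ y in Y \ ball x r, K x y ∂ν‖}

/-- membership in the kernel class `𝒦♯_{s₁,s₂,s₃}(X×Y)`. -/
def MemKSharp (ν : Measure M) (X Y : Set M) (s₁ s₂ s₃ : ℝ) (K : M → M → ℂ) : Prop :=
  MemK X Y s₁ s₂ s₃ K ∧
  (∀ x ∈ X, ∀ r : ℝ, 0 < r → IntegrableOn (K x) (Y \ ball x r) ν) ∧
  BddAbove (maxFunSet ν X Y K)

/-- the norm of the class `𝒦♯_{s₁,s₂,s₃}(X×Y)`. -/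
def kNormSharp (ν : Measure M) (X Y : Set M) (s₁ s₂ s₃ : ℝ) (K : M → M → ℂ) : ℝ :=
  kNorm X Y s₁ s₂ s₃ K + sSup (maxFunSet ν X Y K)

/-- the set of Hölder quotients `|g x - g y| / d(x,y)^β`, `x, y ∈ D`, `x ≠ y`. -/
def holderSet (D : Set M) (β : ℝ) (g : M → ℂ) : Set ℝ :=
  {t | ∃ x ∈ D, ∃ y ∈ D, x ≠ y ∧ t = ‖g x - g y‖ / dist x y ^ β}

/-- `g` is `β`-Hölder continuous on `D`. -/
def IsHolderOn (D : Set M) (β : ℝ) (g : M → ℂ) : Prop :=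
  BddAbove (holderSet D β g)

/-- the `β`-Hölder seminorm `|g|_β` of `g` on `D`. -/
def holderSemi (D : Set M) (β : ℝ) (g : M → ℂ) : ℝ :=
  sSup (holderSet D β g)

def supValSet (D : Set M) (f : M → ℂ) : Set ℝ := {t | ∃ x ∈ D, t = ‖f x‖}

/-- `f` is bounded on `D`. -/
def BoundedOnSet (D : Set M) (f : M → ℂ) : Prop := BddAbove (supValSet D f)

/-- the sup-norm of `f` on `D`. -/
def supNormOn (D : Set M) (f : M → ℂ) : ℝ := sSup (supValSet D f)

/-- `Q[Z,g,1](x) = ∫_Y Z(x,y) (g(x) - g(y)) dν(y)`. -/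
def Qop (ν : Measure M) (Y : Set M) (Z : M → M → ℂ) (g : M → ℂ) (x : M) : ℂ :=
  ∫ y in Y, Z x y * (g x - g y) ∂ν

/-- the modulus of continuity `ω_θ`. -/
def omegaMod (θ r : ℝ) : ℝ :=
  if r ≤ 0 then 0
  else if r ≤ Real.exp (-1 / θ) then r ^ θ * |Real.log r|
  else Real.exp (-1 / θ) ^ θ * |Real.log (Real.exp (-1 / θ))|

/-!
Test `Q[Z,·,1]` against the cutoff `g` that equals `1` on `B(x,r/2)`, vanishes off `B(x,r)` and
is affine in `d(x,·)` in between, so that `|g|_β ≤ 2 r^{-β}`. Pick `x''` with `d(x,x'') = 2r`. At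
`x` the integral defining `Q[Z,g,1]` is `∫_{Y \ B(x,r)} Z(x,·)` plus an annulus term, at `x''`
only `B(x,r)` contributes, and the size bound `|Z(x,y)| ≤ ‖Z‖ d(x,y)^{-υ}` together with Ahlfors
regularity makes both extra terms `O(1)`. Hence
`|∫_{Y \ B(x,r)} Z(x,·)| ≤ |Q(x) - Q(x'')| + O(1) = O(r^{m-β})` with `m = min{β, υ+s₃+β-s₂}`.
For `r` bounded below, the integral is bounded because `ν(Y) < ∞`.
-/

theorem Real.min_one_le_rpow {s β : ℝ} (hs : 0 ≤ s) (hβ0 : 0 ≤ β) (hβ1 : β ≤ 1) :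
    min 1 s ≤ s ^ β := by
  rcases le_total s 1 with h | h
  · exact (min_le_right _ _).trans (Real.self_le_rpow_of_le_one hs h hβ1)
  · exact (min_le_left _ _).trans (Real.one_le_rpow h hβ0)

theorem mul_rpow_div_max_le_self {t r β u : ℝ} (ht : 0 ≤ t) (hr : 0 < r) :
    t * r ^ β / max (r ^ β) u ≤ t := by
  have hrβ : 0 < r ^ β := Real.rpow_pos_of_pos hr β
  rw [mul_div_assoc]
  exact mul_le_of_le_one_right ht ((div_le_one (hrβ.trans_le (le_max_left _ _))).mpr
    (le_max_left _ _))

theorem mul_rpow_div_max_rpow_le {t C K r β s : ℝ} (ht : 0 ≤ t) (hC : 0 ≤ C) (hK : 0 ≤ K)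
    (hr0 : 0 < r) (hr1 : r ≤ 1) (hβ1 : β ≤ 1)
    (htC : t ≤ C * (2 / r ^ β) * (2 * r) ^ min β s + K) :
    t * r ^ β / max (r ^ β) (r ^ s) ≤ 4 * C + K := by
  set m := min β s
  have hrβ : 0 < r ^ β := Real.rpow_pos_of_pos hr0 β
  have hrm : 0 < r ^ m := Real.rpow_pos_of_pos hr0 m
  have hmax : r ^ m ≤ max (r ^ β) (r ^ s) := by
    rcases min_choice β s with h | h
    · rw [show m = β from h]; exact le_max_left _ _
    · rw [show m = s from h]; exact le_max_right _ _
  have hβm : r ^ β / r ^ m ≤ 1 :=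
    (div_le_one hrm).mpr (Real.rpow_le_rpow_of_exponent_ge hr0 hr1 (min_le_left _ _))
  have h2m : (2 : ℝ) ^ m ≤ 2 := by
    simpa using Real.rpow_le_rpow_of_exponent_le one_le_two ((min_le_left β s).trans hβ1)
  calc t * r ^ β / max (r ^ β) (r ^ s) ≤ t * r ^ β / r ^ m := by gcongr
    _ ≤ (C * (2 / r ^ β) * (2 * r) ^ m + K) * r ^ β / r ^ m := by gcongr
    _ = 2 * 2 ^ m * C + K * (r ^ β / r ^ m) := by
        rw [Real.mul_rpow zero_le_two hr0.le]; field_simp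
    _ ≤ 4 * C + K := by nlinarith

section Metric

variable {α : Type*} [MetricSpace α]

theorem le_dist_of_notMem_ball {x y : α} {r : ℝ} (h : y ∉ ball x r) : r ≤ dist x y := by
  rwa [mem_ball, dist_comm, not_lt] at h

def KernelSizeBound (X Y : Set α) (υ N : ℝ) (Z : α → α → ℂ) : Prop :=
  ∀ x ∈ X, ∀ y ∈ Y, ∀ ρ : ℝ, 0 < ρ → ρ ≤ dist x y → ‖Z x y‖ ≤ N / ρ ^ υ

theorem exists_kernelSizeBound_of_bddAbove_kernelSet₁ {X Y : Set α} {υ : ℝ} {Z : α → α → ℂ}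
    (hυ : 0 ≤ υ) (hZ : BddAbove (kernelSet₁ X Y υ Z)) :
    ∃ N : ℝ, 0 ≤ N ∧ KernelSizeBound X Y υ N Z := by
  refine ⟨max (sSup (kernelSet₁ X Y υ Z)) 0, le_max_right _ _, fun x hx y hy ρ hρ hρd ↦ ?_⟩
  have hd : 0 < dist x y := hρ.trans_le hρd
  have hmem : dist x y ^ υ * ‖Z x y‖ ∈ kernelSet₁ X Y υ Z :=
    ⟨x, hx, y, hy, dist_pos.mp hd, rfl⟩
  rw [le_div_iff₀ (by positivity)]
  calc ‖Z x y‖ * ρ ^ υ ≤ dist x y ^ υ * ‖Z x y‖ := by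
        rw [mul_comm]; gcongr
    _ ≤ max (sSup (kernelSet₁ X Y υ Z)) 0 := (le_csSup hZ hmem).trans (le_max_left _ _)

theorem isHolderOn_of_forall_le {D : Set α} {β K : ℝ} {g : α → ℂ}
    (hg : ∀ y y', ‖g y - g y'‖ ≤ K * dist y y' ^ β) : IsHolderOn D β g := by
  refine ⟨K, ?_⟩
  rintro t ⟨y, -, y', -, hne, rfl⟩
  rw [div_le_iff₀ (Real.rpow_pos_of_pos (dist_pos.mpr hne) β)]
  exact hg y y'

theorem holderSemi_le_of_forall_le {D : Set α} {β K : ℝ} {g : α → ℂ} (hK : 0 ≤ K)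
    (hg : ∀ y y', ‖g y - g y'‖ ≤ K * dist y y' ^ β) : holderSemi D β g ≤ K := by
  refine Real.sSup_le ?_ hK
  rintro t ⟨y, -, y', -, hne, rfl⟩
  rw [div_le_iff₀ (Real.rpow_pos_of_pos (dist_pos.mpr hne) β)]
  exact hg y y'

theorem norm_sub_le_of_supNormOn_add_holderSemi_le {D : Set α} {m A : ℝ} {f : α → ℂ}
    (hH : IsHolderOn D m f) (hB : BoundedOnSet D f)
    (hA : supNormOn D f + holderSemi D m f ≤ A) {x x' : α} (hx : x ∈ D) (hx' : x' ∈ D)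
    (hne : x ≠ x') : ‖f x - f x'‖ ≤ A * dist x x' ^ m := by
  have hsup : 0 ≤ supNormOn D f := (norm_nonneg _).trans (le_csSup hB ⟨x, hx, rfl⟩)
  have hquot : ‖f x - f x'‖ / dist x x' ^ m ≤ holderSemi D m f :=
    le_csSup hH ⟨x, hx, x', hx', hne, rfl⟩
  rw [div_le_iff₀ (Real.rpow_pos_of_pos (dist_pos.mpr hne) m)] at hquot
  exact hquot.trans (by gcongr; linarith)

def ballCutoff (x : α) (r : ℝ) (y : α) : ℝ := max 0 (min 1 (2 - 2 * dist x y / r))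

section ballCutoff

variable {x : α} {r : ℝ}

theorem ballCutoff_nonneg (y : α) : 0 ≤ ballCutoff x r y := le_max_left _ _

theorem ballCutoff_le_one (y : α) : ballCutoff x r y ≤ 1 :=
  max_le zero_le_one (min_le_left _ _)

theorem ballCutoff_eq_one (hr : 0 < r) {y : α} (hy : dist x y ≤ r / 2) : ballCutoff x r y = 1 := by
  have : 1 ≤ 2 - 2 * dist x y / r := by
    rw [le_sub_comm, div_le_iff₀ hr]; linarith
  rw [ballCutoff, min_eq_left this, max_eq_right zero_le_one]

theorem ballCutoff_eq_zero (hr : 0 < r) {y : α} (hy : r ≤ dist x y) : ballCutoff x r y = 0 := by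
  have : 2 - 2 * dist x y / r ≤ 0 := by
    rw [sub_nonpos, le_div_iff₀ hr]; linarith
  exact max_eq_left ((min_le_right _ _).trans this)

theorem abs_ballCutoff_sub_le_one (y y' : α) : |ballCutoff x r y - ballCutoff x r y'| ≤ 1 :=
  abs_sub_le_of_nonneg_of_le (ballCutoff_nonneg y) (ballCutoff_le_one y)
    (ballCutoff_nonneg y') (ballCutoff_le_one y')

theorem abs_ballCutoff_sub_le_lipschitz (hr : 0 < r) (y y' : α) :
    |ballCutoff x r y - ballCutoff x r y'| ≤ 2 / r * dist y y' :=
  calc |ballCutoff x r y - ballCutoff x r y'|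
      ≤ |min 1 (2 - 2 * dist x y / r) - min 1 (2 - 2 * dist x y' / r)| := by
        simp only [ballCutoff, max_comm (0 : ℝ)]; exact abs_max_sub_max_le_abs _ _ _
    _ ≤ |(2 - 2 * dist x y / r) - (2 - 2 * dist x y' / r)| := by
        have := abs_min_sub_min_le_max (1 : ℝ) (2 - 2 * dist x y / r) 1 (2 - 2 * dist x y' / r)
        rwa [sub_self, abs_zero, max_eq_right (abs_nonneg _)] at this
    _ = 2 / r * |dist x y' - dist x y| := by
        rw [show (2 - 2 * dist x y / r) - (2 - 2 * dist x y' / r) = 2 / r * (dist x y' - dist x y)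
          by ring, abs_mul, abs_of_pos (div_pos two_pos hr)]
    _ ≤ 2 / r * dist y y' := by
        gcongr; rw [dist_comm x y', dist_comm x y, dist_comm y y']; exact abs_dist_sub_le _ _ _

theorem abs_ballCutoff_sub_le_holder (hr : 0 < r) {β : ℝ} (hβ0 : 0 ≤ β) (hβ1 : β ≤ 1)
    (y y' : α) : |ballCutoff x r y - ballCutoff x r y'| ≤ 2 / r ^ β * dist y y' ^ β := by
  have hmin : |ballCutoff x r y - ballCutoff x r y'| ≤ 2 * min 1 (dist y y' / r) := by
    rw [mul_min_of_nonneg _ _ zero_le_two, mul_one, mul_div_assoc', ← div_mul_eq_mul_div]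
    exact le_min ((abs_ballCutoff_sub_le_one y y').trans one_le_two)
      (abs_ballCutoff_sub_le_lipschitz hr y y')
  calc |ballCutoff x r y - ballCutoff x r y'| ≤ 2 * (dist y y' / r) ^ β :=
        hmin.trans (mul_le_mul_of_nonneg_left
          (Real.min_one_le_rpow (by positivity) hβ0 hβ1) zero_le_two)
    _ = 2 / r ^ β * dist y y' ^ β := by
        rw [Real.div_rpow dist_nonneg hr.le]; ring

theorem continuous_ballCutoff : Continuous (ballCutoff x r) := by
  unfold ballCutoff; fun_prop

theorem norm_ofReal_ballCutoff_sub_le_one (y y' : α) :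
    ‖(ballCutoff x r y : ℂ) - ballCutoff x r y'‖ ≤ 1 := by
  rw [← Complex.ofReal_sub, Complex.norm_real, Real.norm_eq_abs]
  exact abs_ballCutoff_sub_le_one y y'

theorem norm_ofReal_ballCutoff_sub_le_holder (hr : 0 < r) {β : ℝ} (hβ0 : 0 ≤ β) (hβ1 : β ≤ 1)
    (y y' : α) : ‖(ballCutoff x r y : ℂ) - ballCutoff x r y'‖ ≤ 2 / r ^ β * dist y y' ^ β := by
  rw [← Complex.ofReal_sub, Complex.norm_real, Real.norm_eq_abs]
  exact abs_ballCutoff_sub_le_holder hr hβ0 hβ1 y y'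

end ballCutoff

section Measure

variable [MeasurableSpace α]

theorem UpperAhlforsRegular.exists_measureReal_le {ν : Measure α} {X Y : Set α} {υ : ℝ}
    (hreg : UpperAhlforsRegular ν X Y υ) (hυ : 0 ≤ υ) (hYfin : ν Y < ⊤) :
    ∃ c : ℝ, 0 ≤ c ∧ ∀ x ∈ X, ∀ r : ℝ, 0 < r → ν.real (ball x r ∩ Y) ≤ c * r ^ υ := by
  obtain ⟨c, hc, r₀, hr₀, hA⟩ := hreg
  obtain ⟨b, -, hb0, hbr₀⟩ := ENNReal.lt_iff_exists_real_btwn.mp hr₀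
  have hb : 0 < b := ENNReal.ofReal_pos.mp hb0
  refine ⟨max c (ν.real Y / b ^ υ), by positivity, fun x hx r hr ↦ ?_⟩
  rcases lt_or_ge r b with hrb | hrb
  · calc ν.real (ball x r ∩ Y) ≤ c * r ^ υ :=
          ENNReal.toReal_le_of_le_ofReal (by positivity)
            (hA x hx r hr ((ENNReal.ofReal_lt_ofReal_iff hb).mpr hrb |>.trans hbr₀))
      _ ≤ max c (ν.real Y / b ^ υ) * r ^ υ := by gcongr; exact le_max_left _ _
  · calc ν.real (ball x r ∩ Y) ≤ ν.real Y := measureReal_mono inter_subset_right hYfin.ne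
      _ = ν.real Y / b ^ υ * b ^ υ := by field_simp
      _ ≤ max c (ν.real Y / b ^ υ) * r ^ υ := by gcongr; exact le_max_right _ _

variable {X Y : Set α} {ν : Measure α} {Z : α → α → ℂ} {υ N c : ℝ}

theorem norm_setIntegral_inter_ball_le {f : α → ℂ} (hYfin : ν Y < ⊤)
    (hAhl : ∀ x ∈ X, ∀ r : ℝ, 0 < r → ν.real (ball x r ∩ Y) ≤ c * r ^ υ)
    {x : α} (hx : x ∈ X) {r ρ : ℝ} (hr : 0 < r) (hρ : 0 < ρ)
    (hf : ∀ y ∈ Y ∩ ball x r, ‖f y‖ ≤ N / ρ ^ υ) (hN : 0 ≤ N) :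
    ‖∫ y in Y ∩ ball x r, f y ∂ν‖ ≤ N * c * (r / ρ) ^ υ :=
  calc ‖∫ y in Y ∩ ball x r, f y ∂ν‖ ≤ N / ρ ^ υ * ν.real (Y ∩ ball x r) :=
        norm_setIntegral_le_of_norm_le_const ((measure_mono inter_subset_left).trans_lt hYfin) hf
    _ ≤ N / ρ ^ υ * (c * r ^ υ) := by
        gcongr; rw [inter_comm]; exact hAhl x hx r hr
    _ = N * c * (r / ρ) ^ υ := by
        rw [Real.div_rpow hr.le hρ.le]; ring

theorem norm_setIntegral_diff_ball_le_of_le (hYfin : ν Y < ⊤)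
    (hZbd : KernelSizeBound X Y υ N Z)
    {x : α} (hx : x ∈ X) {r δ : ℝ} (hδ : 0 < δ) (hδr : δ ≤ r) (hN : 0 ≤ N) :
    ‖∫ y in Y \ ball x r, Z x y ∂ν‖ ≤ N / δ ^ υ * ν.real Y :=
  calc ‖∫ y in Y \ ball x r, Z x y ∂ν‖ ≤ N / δ ^ υ * ν.real (Y \ ball x r) :=
        norm_setIntegral_le_of_norm_le_const ((measure_mono sdiff_subset).trans_lt hYfin)
          fun y hy ↦ hZbd x hx y hy.1 δ hδ (hδr.trans (le_dist_of_notMem_ball hy.2))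
    _ ≤ N / δ ^ υ * ν.real Y := by
        gcongr
        exacts [hYfin.ne, sdiff_subset]

theorem norm_qop_ballCutoff_le_of_dist_eq (hYm : MeasurableSet Y) (hYfin : ν Y < ⊤)
    (hZbd : KernelSizeBound X Y υ N Z) (hN : 0 ≤ N)
    (hAhl : ∀ x ∈ X, ∀ r : ℝ, 0 < r → ν.real (ball x r ∩ Y) ≤ c * r ^ υ)
    {x x'' : α} (hx : x ∈ X) (hx'' : x'' ∈ X) {r : ℝ} (hr : 0 < r) (hdist : dist x x'' = 2 * r) :
    ‖Qop ν Y Z (fun y ↦ (ballCutoff x r y : ℂ)) x''‖ ≤ N * c := by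
  have hx''far : ballCutoff x r x'' = 0 := ballCutoff_eq_zero hr (by linarith)
  have hvanish : ∀ y ∈ Y \ (Y ∩ ball x r),
      Z x'' y * ((ballCutoff x r x'' : ℂ) - ballCutoff x r y) = 0 := fun y hy ↦ by
    rw [hx''far, ballCutoff_eq_zero hr (le_dist_of_notMem_ball fun h ↦ hy.2 ⟨hy.1, h⟩)]
    simp
  have hbd : ∀ y ∈ Y ∩ ball x r,
      ‖Z x'' y * ((ballCutoff x r x'' : ℂ) - ballCutoff x r y)‖ ≤ N / r ^ υ := fun y hy ↦ by
    have hfar : r ≤ dist x'' y := by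
      have hyx : dist y x < r := hy.2
      have := dist_triangle x'' y x
      rw [dist_comm x'' x] at this
      linarith
    rw [norm_mul, ← mul_one (N / r ^ υ)]
    exact mul_le_mul (hZbd x'' hx'' y hy.1 r hr hfar) (norm_ofReal_ballCutoff_sub_le_one _ _)
      (norm_nonneg _) (by positivity)
  rw [Qop, setIntegral_eq_of_subset_of_forall_sdiff_eq_zero hYm inter_subset_left hvanish]
  simpa [div_self hr.ne'] using norm_setIntegral_inter_ball_le hYfin hAhl hx hr hr hbd hN

variable [BorelSpace α]

theorem integrableOn_diff_ball_mul (hYm : MeasurableSet Y) (hYfin : ν Y < ⊤)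
    (hZc : ContinuousOn (fun p : α × α ↦ Z p.1 p.2) ((X ×ˢ Y) \ {p : α × α | p.1 = p.2}))
    (hZbd : KernelSizeBound X Y υ N Z)
    {x : α} (hx : x ∈ X) {ρ : ℝ} (hρ : 0 < ρ) {w : α → ℂ} (hw : Continuous w)
    (hw1 : ∀ y, ‖w y‖ ≤ 1) :
    IntegrableOn (fun y ↦ Z x y * w y) (Y \ ball x ρ) ν := by
  have hS : MeasurableSet (Y \ ball x ρ) := hYm.diff measurableSet_ball
  have hfar : ∀ y ∈ Y \ ball x ρ, ρ ≤ dist x y := fun y hy ↦ le_dist_of_notMem_ball hy.2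
  have hZx : ContinuousOn (Z x) (Y \ ball x ρ) :=
    hZc.comp (continuous_const.prodMk continuous_id).continuousOn fun y hy ↦
      ⟨⟨hx, hy.1⟩, dist_pos.mp (hρ.trans_le (hfar y hy))⟩
  have hcont : ContinuousOn (fun y ↦ Z x y * w y) (Y \ ball x ρ) := hZx.mul hw.continuousOn
  refine ⟨hcont.aestronglyMeasurable hS, .restrict_of_bounded (C := N / ρ ^ υ)
    ((measure_mono sdiff_subset).trans_lt hYfin) ?_⟩
  filter_upwards [ae_restrict_mem hS] with y hy
  rw [norm_mul, ← mul_one (N / ρ ^ υ)]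
  exact mul_le_mul (hZbd x hx y hy.1 ρ hρ (hfar y hy)) (hw1 y) (norm_nonneg _)
    ((norm_nonneg _).trans (hZbd x hx y hy.1 ρ hρ (hfar y hy)))

theorem norm_qop_ballCutoff_sub_setIntegral_le (hYm : MeasurableSet Y) (hYfin : ν Y < ⊤)
    (hZc : ContinuousOn (fun p : α × α ↦ Z p.1 p.2) ((X ×ˢ Y) \ {p : α × α | p.1 = p.2}))
    (hZbd : KernelSizeBound X Y υ N Z) (hN : 0 ≤ N)
    (hAhl : ∀ x ∈ X, ∀ r : ℝ, 0 < r → ν.real (ball x r ∩ Y) ≤ c * r ^ υ)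
    {x : α} (hx : x ∈ X) {r : ℝ} (hr : 0 < r) :
    ‖Qop ν Y Z (fun y ↦ (ballCutoff x r y : ℂ)) x - ∫ y in Y \ ball x r, Z x y ∂ν‖ ≤
      N * c * 2 ^ υ := by
  set F : α → ℂ := fun y ↦ Z x y * ((ballCutoff x r x : ℂ) - ballCutoff x r y)
  have hr2 : 0 < r / 2 := half_pos hr
  have hnear : ∀ y, dist x y ≤ r / 2 → F y = 0 := fun y hy ↦ by
    simp [F, ballCutoff_eq_one hr hy, ballCutoff_eq_one hr (dist_self x ▸ hr2.le)]
  have hint : IntegrableOn F Y ν := by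
    have hin : IntegrableOn F (Y ∩ ball x (r / 2)) ν :=
      integrableOn_zero.congr_fun (fun y hy ↦ (hnear y (by
        rw [dist_comm]; exact (mem_ball.mp hy.2).le)).symm) (hYm.inter measurableSet_ball)
    have hout : IntegrableOn F (Y \ ball x (r / 2)) ν :=
      integrableOn_diff_ball_mul hYm hYfin hZc hZbd hx hr2
        (continuous_const.sub (Complex.continuous_ofReal.comp continuous_ballCutoff))
        (norm_ofReal_ballCutoff_sub_le_one x)
    simpa only [inter_union_sdiff] using hin.union hout
  have hfar : ∫ y in Y \ ball x r, F y ∂ν = ∫ y in Y \ ball x r, Z x y ∂ν :=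
    setIntegral_congr_fun (hYm.diff measurableSet_ball) fun y hy ↦ by
      simp [F, ballCutoff_eq_zero hr (le_dist_of_notMem_ball hy.2),
        ballCutoff_eq_one hr (dist_self x ▸ hr2.le)]
  have hbd : ∀ y ∈ Y ∩ ball x r, ‖F y‖ ≤ N / (r / 2) ^ υ := fun y hy ↦ by
    rcases le_or_gt (dist x y) (r / 2) with hy' | hy'
    · rw [hnear y hy', norm_zero]; positivity
    · rw [norm_mul, ← mul_one (N / (r / 2) ^ υ)]
      exact mul_le_mul (hZbd x hx y hy.1 _ hr2 hy'.le) (norm_ofReal_ballCutoff_sub_le_one _ _)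
        (norm_nonneg _) (by positivity)
  rw [Qop, ← integral_inter_add_sdiff measurableSet_ball hint, hfar, add_sub_cancel_right]
  simpa [div_div_cancel₀ hr.ne'] using
    norm_setIntegral_inter_ball_le hYfin hAhl hx hr hr2 hbd hN

theorem norm_setIntegral_diff_ball_le (hYm : MeasurableSet Y) (hYfin : ν Y < ⊤)
    (hZc : ContinuousOn (fun p : α × α ↦ Z p.1 p.2) ((X ×ˢ Y) \ {p : α × α | p.1 = p.2}))
    (hZbd : KernelSizeBound X Y υ N Z) (hN : 0 ≤ N)
    (hAhl : ∀ x ∈ X, ∀ r : ℝ, 0 < r → ν.real (ball x r ∩ Y) ≤ c * r ^ υ)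
    {x x'' : α} (hx : x ∈ X) (hx'' : x'' ∈ X) {r : ℝ} (hr : 0 < r) (hdist : dist x x'' = 2 * r) :
    ‖∫ y in Y \ ball x r, Z x y ∂ν‖ ≤
      ‖Qop ν Y Z (fun y ↦ (ballCutoff x r y : ℂ)) x -
          Qop ν Y Z (fun y ↦ (ballCutoff x r y : ℂ)) x''‖ + N * c * (1 + 2 ^ υ) := by
  set Q := Qop ν Y Z (fun y ↦ (ballCutoff x r y : ℂ))
  have hQx := norm_qop_ballCutoff_sub_setIntegral_le hYm hYfin hZc hZbd hN hAhl hx hr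
  have hQx'' := norm_qop_ballCutoff_le_of_dist_eq hYm hYfin hZbd hN hAhl hx hx'' hr hdist
  calc ‖∫ y in Y \ ball x r, Z x y ∂ν‖
      = ‖(Q x - Q x'') + Q x'' - (Q x - ∫ y in Y \ ball x r, Z x y ∂ν)‖ := by ring_nf
    _ ≤ ‖Q x - Q x''‖ + ‖Q x''‖ + ‖Q x - ∫ y in Y \ ball x r, Z x y ∂ν‖ :=
        (norm_sub_le _ _).trans (by gcongr; exact norm_add_le _ _)
    _ ≤ ‖Q x - Q x''‖ + N * c * (1 + 2 ^ υ) := by linarith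

end Measure

end Metric

theorem stmt_4_general {M : Type*} [MetricSpace M] [MeasurableSpace M] [BorelSpace M]
    (X Y : Set M) (ν : Measure M) (hYm : MeasurableSet Y)
    (υ β s₂ s₃ : ℝ)
    (hυ : 0 < υ) (hβ0 : 0 < β) (hβ1 : β ≤ 1) (hs₃0 : 0 < s₃)
    (hYfin : ν Y < ⊤)
    (ha : ∃ a : ℝ, 0 < a ∧ ∀ ρ : ℝ, 0 < ρ → ρ < a → ∀ x' ∈ X, ∃ x'' ∈ X, dist x' x'' = ρ)
    (hreg : UpperAhlforsRegular ν X Y υ)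
    (Z : M → M → ℂ) (hZ : MemK X Y υ s₂ s₃ Z)
    (hQ : ∃ C : ℝ, 0 < C ∧ ∀ g : M → ℂ, IsHolderOn (X ∪ Y) β g →
      BoundedOnSet X (Qop ν Y Z g) ∧
      IsHolderOn X (min β (υ + s₃ + β - s₂)) (Qop ν Y Z g) ∧
      supNormOn X (Qop ν Y Z g) + holderSemi X (min β (υ + s₃ + β - s₂)) (Qop ν Y Z g) ≤
        C * holderSemi (X ∪ Y) β g) :
    BddAbove {t : ℝ | ∃ x ∈ X, ∃ r : ℝ, 0 < r ∧ r < Real.exp (-1 / s₃) ∧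
      t = ‖∫ y in Y \ ball x r, Z x y ∂ν‖ * r ^ β /
        max (r ^ β) (r ^ (υ + s₃ + β - s₂))} := by
  obtain ⟨a, ha0, haX⟩ := ha
  obtain ⟨C, hC0, hQ⟩ := hQ
  obtain ⟨c, hc0, hAhl⟩ := hreg.exists_measureReal_le hυ.le hYfin
  obtain ⟨N, hN0, hZbd⟩ := exists_kernelSizeBound_of_bddAbove_kernelSet₁ hυ.le hZ.2.1
  refine ⟨max (4 * C + N * c * (1 + 2 ^ υ)) (N / (a / 2) ^ υ * ν.real Y), ?_⟩
  rintro t ⟨x, hx, r, hr0, hre, rfl⟩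
  have hr1 : r ≤ 1 := hre.le.trans
    (Real.exp_le_one_iff.mpr (div_nonpos_of_nonpos_of_nonneg (by norm_num) hs₃0.le))
  rcases lt_or_ge r (a / 2) with hra | hra
  · obtain ⟨x'', hx'', hdist⟩ := haX (2 * r) (by positivity) (by linarith) x hx
    have hg := norm_ofReal_ballCutoff_sub_le_holder (x := x) hr0 hβ0.le hβ1
    obtain ⟨hB, hH, hsum⟩ := hQ _ (isHolderOn_of_forall_le hg)
    have hsemi := holderSemi_le_of_forall_le (D := X ∪ Y) (by positivity) hg
    have hQdiff := norm_sub_le_of_supNormOn_add_holderSemi_le hH hB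
      (hsum.trans (mul_le_mul_of_nonneg_left hsemi hC0.le)) hx hx'' (dist_pos.mp (by linarith))
    rw [hdist] at hQdiff
    refine le_max_of_le_left (mul_rpow_div_max_rpow_le (norm_nonneg _) hC0.le (by positivity)
      hr0 hr1 hβ1 ?_)
    exact (norm_setIntegral_diff_ball_le hYm hYfin hZ.1 hZbd hN0 hAhl hx hx'' hr0 hdist).trans
      (by gcongr)
  · exact le_max_of_le_right ((mul_rpow_div_max_le_self (norm_nonneg _) hr0).trans
      (norm_setIntegral_diff_ball_le_of_le hYfin hZbd hx (by positivity) hra hN0))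

theorem stmt_4 {M : Type*} [MetricSpace M] [MeasurableSpace M] [BorelSpace M]
    (X Y : Set M) (ν : Measure M) (hYm : MeasurableSet Y)
    (υ β s₂ s₃ : ℝ)
    (hυ : 0 < υ) (hβ0 : 0 < β) (hβ1 : β ≤ 1) (hs₂ : β ≤ s₂) (hs₃0 : 0 < s₃) (hs₃1 : s₃ ≤ 1)
    (hball : ∀ x ∈ X, ∀ r : ℝ, 0 < r → ν (ball x r ∩ Y) < ⊤)
    (hYfin : ν Y < ⊤)
    (ha : ∃ a : ℝ, 0 < a ∧ ∀ ρ : ℝ, 0 < ρ → ρ < a → ∀ x' ∈ X, ∃ x'' ∈ X, dist x' x'' = ρ)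
    (h1 : υ < s₂ - β) (h2 : s₂ < υ + β + s₃)
    (hreg : UpperAhlforsRegular ν X Y υ)
    (Z : M → M → ℂ) (hZ : MemK X Y υ s₂ s₃ Z)
    (hQ : ∃ C : ℝ, 0 < C ∧ ∀ g : M → ℂ, IsHolderOn (X ∪ Y) β g →
      BoundedOnSet X (Qop ν Y Z g) ∧
      IsHolderOn X (min β (υ + s₃ + β - s₂)) (Qop ν Y Z g) ∧
      supNormOn X (Qop ν Y Z g) + holderSemi X (min β (υ + s₃ + β - s₂)) (Qop ν Y Z g) ≤
        C * holderSemi (X ∪ Y) β g) :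
    BddAbove {t : ℝ | ∃ x ∈ X, ∃ r : ℝ, 0 < r ∧ r < Real.exp (-1 / s₃) ∧
      t = ‖∫ y in Y \ ball x r, Z x y ∂ν‖ * r ^ β /
        max (r ^ β) (r ^ (υ + s₃ + β - s₂))} :=
  stmt_4_general X Y ν hYm υ β s₂ s₃ hυ hβ0 hβ1 hs₃0 hYfin ha hreg Z hZ hQ
end
end

section
/- Let (M,d) be a metric space and X, Y ⊆ M. Assume there exists a ∈ (0,∞) such that for each ρ ∈ (0,a) and each x' ∈ X there exists x'' ∈ X with d(x',x'') = ρ. Let υ_Y ∈ (0,∞), β ∈ (0,1], s₂ ∈ [β,∞), s₃ ∈ (0,1], with s₂ − β < υ_Y and in addition s₃ ≥ β. Let ν be a measure on a σ-algebra of subsets of Y containing the Borel subsets of Y, with ν(B(x,r) ∩ Y) < ∞ for all x ∈ X and r > 0, and ν(Y) < ∞. Let Y be upper υ_Y-Ahlfors regular with respect to X and let Z ∈ 𝒦_{υ_Y,s₂,s₃}(X×Y). If there exists C > 0 such that for every g ∈ C^{0,β}(X∪Y) the function Q[Z,g,1] is bounded and β-Hölder continuous on X with sup-norm plus β-Hölder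 seminorm at most C·|g|_β, then sup_{x∈X} sup_{r>0} |∫_{Y\B(x,r)} Z(x,y) dν(y)| < ∞. -/
open MeasureTheory Metric Set
open scoped ENNReal

noncomputable section

variable {M : Type*} [MetricSpace M] [MeasurableSpace M] [BorelSpace M]

/-! For `x ∈ X` and small `r`, pick `x' ∈ X` with `d(x, x') = r` and test `Q` on
`g = min (d(x, ·), r) ^ β`, whose `β`-Hölder seminorm is at most `1`. Since `g x = 0` and
`g = r ^ β` off `B(x, r)`, the difference `Q g(x) - Q g(x')` equals `-r ^ β ∫_{Y \ B(x,r)} Z(x, ·)`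
up to integrals of `|Z(z, y)| d(z, y) ^ β ≲ d(z, y) ^ (β - υ)` over balls of radius at most `2 r`,
which upper Ahlfors regularity bounds by `O(r ^ β)` (sum over dyadic annuli). The Hölder bound
`|Q g(x) - Q g(x')| ≤ C r ^ β` then bounds the truncated integral uniformly in `x` and `r`. For `r`
bounded below, the size bound `|Z(x, y)| ≲ d(x, y) ^ (-υ)` and `ν Y < ∞` suffice. -/

open Filter Topology

section Elementary

lemma abs_rpow_sub_rpow_le {β a b : ℝ} (hβ0 : 0 ≤ β) (hβ1 : β ≤ 1) (ha : 0 ≤ a) (hb : 0 ≤ b) :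
    |a ^ β - b ^ β| ≤ |a - b| ^ β := by
  wlog hab : b ≤ a generalizing a b
  · rw [abs_sub_comm, abs_sub_comm a b]
    exact this hb ha (le_of_not_ge hab)
  have hmono : b ^ β ≤ a ^ β := Real.rpow_le_rpow hb hab hβ0
  have hsub : a ^ β ≤ b ^ β + (a - b) ^ β := by
    simpa using Real.rpow_add_le_add_rpow hb (sub_nonneg.2 hab) hβ0 hβ1
  rw [abs_of_nonneg (sub_nonneg.2 hmono), abs_of_nonneg (sub_nonneg.2 hab)]
  linarith

lemma exists_div_two_pow_le_lt {d R : ℝ} (hd : 0 < d) (hdR : d < R) :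
    ∃ k : ℕ, R / 2 ^ (k + 1) ≤ d ∧ d < R / 2 ^ k := by
  by_contra! h
  have hlt : ∀ k : ℕ, d < R / 2 ^ k := by
    intro k
    induction k with
    | zero => simpa using hdR
    | succ k ih => exact lt_of_not_ge fun hk => (h k hk).not_gt ih
  obtain ⟨k, hk⟩ := pow_unbounded_of_one_lt (R / d) one_lt_two
  rw [div_lt_iff₀ hd, ← div_lt_iff₀' (by positivity)] at hk
  exact (hlt k).not_gt hk

end Elementary

section Potential

variable {α : Type*} [MetricSpace α] [MeasurableSpace α] {μ : Measure α} {x : α} {c υ R : ℝ}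

lemma measure_singleton_eq_zero_of_measure_ball_le (hυ : 0 < υ) (hR : 0 < R)
    (hμ : ∀ ρ, 0 < ρ → ρ ≤ R → μ (ball x ρ) ≤ ENNReal.ofReal (c * ρ ^ υ)) : μ {x} = 0 := by
  have hlim : Tendsto (fun ρ : ℝ => ENNReal.ofReal (c * ρ ^ υ)) (𝓝[>] 0) (𝓝 0) := by
    have := ((Real.continuousAt_rpow_const 0 υ (Or.inr hυ.le)).tendsto.const_mul c).mono_left
      (nhdsWithin_le_nhds (s := Ioi 0))
    simpa [Real.zero_rpow hυ.ne'] using ENNReal.tendsto_ofReal this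
  refine nonpos_iff_eq_zero.1 (ge_of_tendsto hlim ?_)
  filter_upwards [Ioc_mem_nhdsGT hR] with ρ hρ
  exact (measure_mono (singleton_subset_iff.2 (mem_ball_self hρ.1))).trans (hμ ρ hρ.1 hρ.2)

lemma lintegral_ball_dist_rpow_le [OpensMeasurableSpace α] {t : ℝ} (hc : 0 ≤ c) (hυ : 0 < υ)
    (ht : 0 < t) (hR : 0 < R)
    (hμ : ∀ ρ, 0 < ρ → ρ ≤ R → μ (ball x ρ) ≤ ENNReal.ofReal (c * ρ ^ υ)) :
    ∫⁻ y in ball x R, ENNReal.ofReal (dist x y ^ (t - υ)) ∂μ ≤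
      ENNReal.ofReal (2 ^ υ * c * (1 - (2 ^ t)⁻¹)⁻¹ * R ^ t) := by
  set f : α → ℝ≥0∞ := fun y => ENNReal.ofReal (dist x y ^ (t - υ))
  set q : ℝ := (2 ^ t)⁻¹
  set A : ℕ → Set α := fun k => ball x (R / 2 ^ k) \ ball x (R / 2 ^ (k + 1))
  have hq0 : 0 ≤ q := by positivity
  have hq1 : q < 1 := inv_lt_one_of_one_lt₀ (Real.one_lt_rpow one_lt_two ht)
  have hcover : ball x R ⊆ {x} ∪ ⋃ k, A k := by
    intro y hy
    rcases eq_or_ne y x with rfl | hyx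
    · exact Or.inl rfl
    obtain ⟨k, hk⟩ := exists_div_two_pow_le_lt (dist_pos.2 hyx) (mem_ball.1 hy)
    exact Or.inr (mem_iUnion.2 ⟨k, mem_ball.2 hk.2, fun h => (mem_ball.1 h).not_ge hk.1⟩)
  have hannulus : ∀ k, ∫⁻ y in A k, f y ∂μ ≤ ENNReal.ofReal (2 ^ υ * c * R ^ t * q ^ k) := by
    intro k
    set s := R / 2 ^ k
    have hs : 0 < s := by positivity
    have hf : ∀ y ∈ A k, f y ≤ ENNReal.ofReal (2 ^ υ * s ^ t / s ^ υ) := by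
      rintro y ⟨hy, hy'⟩
      rw [mem_ball, dist_comm] at hy hy'
      have hlow : s / 2 ≤ dist x y := by
        rw [div_div, ← pow_succ]
        exact not_lt.1 hy'
      refine ENNReal.ofReal_le_ofReal ?_
      rw [Real.rpow_sub ((half_pos hs).trans_le hlow)]
      calc dist x y ^ t / dist x y ^ υ ≤ s ^ t / (s / 2) ^ υ := by
            gcongr
        _ = 2 ^ υ * s ^ t / s ^ υ := by
            rw [Real.div_rpow hs.le zero_le_two]
            field_simp
    have hA : μ (A k) ≤ ENNReal.ofReal (c * s ^ υ) :=
      (measure_mono sdiff_subset).trans (hμ s hs (div_le_self hR.le (one_le_pow₀ one_le_two)))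
    calc ∫⁻ y in A k, f y ∂μ ≤ ∫⁻ _ in A k, ENNReal.ofReal (2 ^ υ * s ^ t / s ^ υ) ∂μ :=
          setLIntegral_mono measurable_const hf
      _ = ENNReal.ofReal (2 ^ υ * s ^ t / s ^ υ) * μ (A k) := setLIntegral_const _ _
      _ ≤ ENNReal.ofReal (2 ^ υ * s ^ t / s ^ υ) * ENNReal.ofReal (c * s ^ υ) := by gcongr
      _ = ENNReal.ofReal (2 ^ υ * c * R ^ t * q ^ k) := by
          rw [← ENNReal.ofReal_mul (by positivity)]
          congr 1
          have hst : s ^ t = R ^ t * q ^ k := by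
            rw [Real.div_rpow hR.le (by positivity), ← Real.rpow_pow_comm zero_le_two, inv_pow,
              div_eq_mul_inv]
          rw [hst]
          field_simp
  calc ∫⁻ y in ball x R, f y ∂μ ≤ ∫⁻ y in {x} ∪ ⋃ k, A k, f y ∂μ := lintegral_mono_set hcover
    _ ≤ ∫⁻ y in {x}, f y ∂μ + ∫⁻ y in ⋃ k, A k, f y ∂μ := lintegral_union_le _ _ _
    _ = ∫⁻ y in ⋃ k, A k, f y ∂μ := by
        rw [setLIntegral_measure_zero _ _ (measure_singleton_eq_zero_of_measure_ball_le hυ hR hμ),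
          zero_add]
    _ ≤ ∑' k, ∫⁻ y in A k, f y ∂μ := lintegral_iUnion_le _ _
    _ ≤ ∑' k, ENNReal.ofReal (2 ^ υ * c * R ^ t * q ^ k) := ENNReal.tsum_le_tsum hannulus
    _ = ENNReal.ofReal (2 ^ υ * c * (1 - q)⁻¹ * R ^ t) := by
        rw [← ENNReal.ofReal_tsum_of_nonneg (fun k => by positivity)
          ((summable_geometric_of_lt_one hq0 hq1).mul_left _), tsum_mul_left,
          tsum_geometric_of_lt_one hq0 hq1]
        ring_nf

end Potential

section TestFunction

variable {α : Type*} [PseudoMetricSpace α] {x : α} {r β : ℝ}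

def truncDistRpow (x : α) (r β : ℝ) (y : α) : ℂ := ((min (dist x y) r ^ β : ℝ) : ℂ)

lemma truncDistRpow_self (hr : 0 ≤ r) (hβ : β ≠ 0) : truncDistRpow x r β x = 0 := by
  simp [truncDistRpow, hr, Real.zero_rpow hβ]

lemma truncDistRpow_of_le {y : α} (h : r ≤ dist x y) : truncDistRpow x r β y = (r ^ β : ℝ) := by
  simp [truncDistRpow, min_eq_right h]

lemma continuous_truncDistRpow (hβ : 0 ≤ β) : Continuous (truncDistRpow x r β) :=
  Complex.continuous_ofReal.comp
    (((continuous_const.dist continuous_id).min continuous_const).rpow_const fun _ => Or.inr hβ)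

lemma norm_truncDistRpow_sub_le (hr : 0 ≤ r) (hβ0 : 0 ≤ β) (hβ1 : β ≤ 1) (u v : α) :
    ‖truncDistRpow x r β u - truncDistRpow x r β v‖ ≤ dist u v ^ β := by
  rw [truncDistRpow, truncDistRpow, ← Complex.ofReal_sub, Complex.norm_real, Real.norm_eq_abs]
  refine (abs_rpow_sub_rpow_le hβ0 hβ1 (le_min dist_nonneg hr) (le_min dist_nonneg hr)).trans
    (Real.rpow_le_rpow (abs_nonneg _) ?_ hβ0)
  calc |min (dist x u) r - min (dist x v) r| ≤ |dist x u - dist x v| := by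
        simpa using abs_min_sub_min_le_max (dist x u) r (dist x v) r
    _ ≤ dist u v := by
        rw [dist_comm x u, dist_comm x v]
        exact abs_dist_sub_le u v x

end TestFunction

section Integrability

variable {α : Type*} [MeasurableSpace α] {μ : Measure α}

lemma integrable_and_norm_integral_le_of_lintegral_le {E : Type*} [NormedAddCommGroup E]
    [NormedSpace ℝ E] {f : α → E} {G : α → ℝ≥0∞} {D : ℝ} (hD : 0 ≤ D)
    (hf : AEStronglyMeasurable f μ) (hfG : ∀ᵐ y ∂μ, ‖f y‖ₑ ≤ G y)
    (hG : ∫⁻ y, G y ∂μ ≤ ENNReal.ofReal D) :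
    Integrable f μ ∧ ‖∫ y, f y ∂μ‖ ≤ D := by
  have hlint : ∫⁻ y, ‖f y‖ₑ ∂μ ≤ ENNReal.ofReal D := (lintegral_mono_ae hfG).trans hG
  refine ⟨⟨hf, hlint.trans_lt ENNReal.ofReal_lt_top⟩, ?_⟩
  rw [← ENNReal.ofReal_le_ofReal_iff hD, ofReal_norm]
  exact (enorm_integral_le_lintegral_enorm f).trans hlint

end Integrability

section Estimates

variable {α : Type*} [MetricSpace α]

lemma norm_mul_sub_le_dist_rpow {k g : α → ℂ} {z y : α} {c₁ β υ : ℝ} (hc₁ : 0 ≤ c₁)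
    (hk : y ≠ z → ‖k y‖ ≤ c₁ * dist z y ^ (-υ)) (hg : ‖g z - g y‖ ≤ dist z y ^ β) :
    ‖k y * (g z - g y)‖ ≤ c₁ * dist z y ^ (β - υ) := by
  rcases eq_or_ne y z with rfl | hyz
  · rw [sub_self, mul_zero, norm_zero]
    exact mul_nonneg hc₁ (Real.rpow_nonneg dist_nonneg _)
  have hd : 0 < dist z y := dist_pos.2 hyz.symm
  calc ‖k y * (g z - g y)‖ ≤ c₁ * dist z y ^ (-υ) * dist z y ^ β := by
        rw [norm_mul]
        gcongr
        exact hk hyz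
    _ = c₁ * dist z y ^ (β - υ) := by
        rw [mul_assoc, ← Real.rpow_add hd, neg_add_eq_sub]

variable [MeasurableSpace α] {μ : Measure α}

lemma integrableOn_ball_and_norm_setIntegral_mul_sub_le [OpensMeasurableSpace α] {k g : α → ℂ}
    {z : α} {c₁ β υ K R : ℝ} (hc₁ : 0 ≤ c₁) (hK : 0 ≤ K) (hR : 0 ≤ R)
    (hkm : AEStronglyMeasurable k μ) (hgc : Continuous g)
    (hk : ∀ᵐ y ∂μ, y ≠ z → ‖k y‖ ≤ c₁ * dist z y ^ (-υ)) (hg : ∀ y, ‖g z - g y‖ ≤ dist z y ^ β)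
    (hball : ∫⁻ y in ball z R, ENNReal.ofReal (dist z y ^ (β - υ)) ∂μ ≤
      ENNReal.ofReal (K * R ^ β)) :
    IntegrableOn (fun y => k y * (g z - g y)) (ball z R) μ ∧
      ‖∫ y in ball z R, k y * (g z - g y) ∂μ‖ ≤ c₁ * (K * R ^ β) := by
  refine integrable_and_norm_integral_le_of_lintegral_le (by positivity)
    ((hkm.mul (continuous_const.sub hgc).aestronglyMeasurable).restrict)
    (G := fun y => ENNReal.ofReal c₁ * ENNReal.ofReal (dist z y ^ (β - υ))) ?_ ?_
  · refine ae_restrict_of_ae (hk.mono fun y hy => ?_)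
    rw [← ENNReal.ofReal_mul hc₁, ← ofReal_norm]
    exact ENNReal.ofReal_le_ofReal (norm_mul_sub_le_dist_rpow hc₁ hy (hg y))
  · rw [lintegral_const_mul' _ _ ENNReal.ofReal_ne_top, ENNReal.ofReal_mul hc₁]
    gcongr

lemma integrableOn_compl_ball_and_norm_setIntegral_le [OpensMeasurableSpace α] [IsFiniteMeasure μ]
    {k : α → ℂ} {x : α} {c₁ υ ρ r : ℝ} (hc₁ : 0 ≤ c₁) (hυ : 0 ≤ υ) (hρ : 0 < ρ) (hρr : ρ ≤ r)
    (hkm : AEStronglyMeasurable k μ) (hk : ∀ᵐ y ∂μ, y ≠ x → ‖k y‖ ≤ c₁ * dist x y ^ (-υ)) :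
    IntegrableOn k (ball x r)ᶜ μ ∧ ‖∫ y in (ball x r)ᶜ, k y ∂μ‖ ≤ c₁ * ρ ^ (-υ) * μ.real univ := by
  have hbound : ∀ᵐ y ∂μ.restrict (ball x r)ᶜ, ‖k y‖ ≤ c₁ * ρ ^ (-υ) := by
    refine (ae_restrict_iff' measurableSet_ball.compl).2 (hk.mono fun y hy hyr => ?_)
    have hry : r ≤ dist x y := by simpa [dist_comm] using hyr
    have hyx : y ≠ x := fun h => by simp [h] at hyr; linarith
    refine (hy hyx).trans (mul_le_mul_of_nonneg_left ?_ hc₁)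
    exact Real.rpow_le_rpow_of_nonpos hρ (hρr.trans hry) (neg_nonpos.2 hυ)
  refine ⟨Measure.integrableOn_of_bounded (measure_ne_top _ _) hkm hbound, ?_⟩
  refine (norm_setIntegral_le_of_norm_le_const_ae (measure_lt_top _ _) hbound).trans ?_
  exact mul_le_mul_of_nonneg_left (measureReal_mono (subset_univ _)) (by positivity)

end Estimates

section KeyEstimate

variable {α : Type*} [MetricSpace α] [MeasurableSpace α] [OpensMeasurableSpace α] {μ : Measure α}

theorem norm_setIntegral_compl_ball_le {X : Set α} {Z : α → α → ℂ} {x x' : α}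
    {r δ β υ c₁ K C : ℝ} (hβ0 : 0 < β) (hβ1 : β ≤ 1) (hr : 0 < r) (hrδ : 2 * r ≤ δ)
    (hx : x ∈ X) (hx' : x' ∈ X) (hxx' : dist x x' = r) (hc₁ : 0 ≤ c₁) (hK : 0 ≤ K)
    (hZm : ∀ z ∈ X, AEStronglyMeasurable (Z z) μ)
    (hZ : ∀ z ∈ X, ∀ᵐ y ∂μ, y ≠ z → ‖Z z y‖ ≤ c₁ * dist z y ^ (-υ))
    (hball : ∀ z ∈ X, ∀ R, 0 < R → R ≤ δ →
      ∫⁻ y in ball z R, ENNReal.ofReal (dist z y ^ (β - υ)) ∂μ ≤ ENNReal.ofReal (K * R ^ β))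
    (hint : IntegrableOn (Z x) (ball x r)ᶜ μ)
    (hQ : ∀ g : α → ℂ, (∀ u v, ‖g u - g v‖ ≤ dist u v ^ β) →
      ‖∫ y, Z x y * (g x - g y) ∂μ - ∫ y, Z x' y * (g x' - g y) ∂μ‖ ≤ C * dist x x' ^ β) :
    ‖∫ y in (ball x r)ᶜ, Z x y ∂μ‖ ≤ C + c₁ * K * (1 + 2 ^ β) := by
  set g := truncDistRpow x r β
  set I := ∫ y in (ball x r)ᶜ, Z x y ∂μ
  have hg : ∀ u v, ‖g u - g v‖ ≤ dist u v ^ β := norm_truncDistRpow_sub_le hr.le hβ0.le hβ1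
  have hgc : Continuous g := continuous_truncDistRpow hβ0.le
  have hgx : g x = 0 := truncDistRpow_self hr.le hβ0.ne'
  have hg_out : ∀ y ∉ ball x r, g y = (r ^ β : ℝ) := fun y hy =>
    truncDistRpow_of_le (by simpa [dist_comm] using hy)
  obtain ⟨hin, hnear⟩ := integrableOn_ball_and_norm_setIntegral_mul_sub_le hc₁ hK hr.le
    (hZm x hx) hgc (hZ x hx) (hg x) (hball x hx r hr (by linarith))
  obtain ⟨-, hnear'⟩ := integrableOn_ball_and_norm_setIntegral_mul_sub_le hc₁ hK (by positivity)
    (hZm x' hx') hgc (hZ x' hx') (hg x') (hball x' hx' (2 * r) (by positivity) hrδ)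
  have hout : EqOn (fun y => Z x y * (g x - g y)) (fun y => -((r ^ β : ℝ) • Z x y)) (ball x r)ᶜ :=
    fun y hy => by simp [hgx, hg_out y hy, mul_comm]
  have hQx : ∫ y, Z x y * (g x - g y) ∂μ =
      ∫ y in ball x r, Z x y * (g x - g y) ∂μ - (r ^ β : ℝ) • I := by
    have hint' : IntegrableOn (fun y => Z x y * (g x - g y)) (ball x r)ᶜ μ :=
      (integrableOn_congr_fun hout measurableSet_ball.compl).2 (hint.smul (r ^ β : ℝ)).neg
    rw [← integral_add_compl measurableSet_ball
        (integrableOn_univ.1 (by simpa using hin.union hint')),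
      setIntegral_congr_fun measurableSet_ball.compl hout, integral_neg, integral_smul,
      sub_eq_add_neg]
  have hQx' : ∫ y, Z x' y * (g x' - g y) ∂μ = ∫ y in ball x' (2 * r), Z x' y * (g x' - g y) ∂μ := by
    refine (setIntegral_eq_integral_of_forall_compl_eq_zero fun y hy => ?_).symm
    have hy' : y ∉ ball x r := fun h => hy <| by
      rw [mem_ball] at h ⊢
      linarith [dist_triangle y x x', dist_comm x x']
    rw [hg_out y hy', hg_out x' (by simp [dist_comm, hxx']), sub_self, mul_zero]
  have hkey : r ^ β * ‖I‖ ≤ r ^ β * (C + c₁ * K * (1 + 2 ^ β)) := by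
    have hsplit : (r ^ β : ℝ) • I = ∫ y in ball x r, Z x y * (g x - g y) ∂μ -
        (∫ y, Z x y * (g x - g y) ∂μ - ∫ y, Z x' y * (g x' - g y) ∂μ) -
        ∫ y in ball x' (2 * r), Z x' y * (g x' - g y) ∂μ := by
      rw [hQx, ← hQx']
      abel
    calc r ^ β * ‖I‖ = ‖(r ^ β : ℝ) • I‖ := by
          rw [norm_smul, Real.norm_of_nonneg (by positivity)]
      _ ≤ c₁ * (K * r ^ β) + C * r ^ β + c₁ * (K * (2 * r) ^ β) := by
          rw [hsplit]
          exact (norm_sub_le _ _).trans (add_le_add ((norm_sub_le _ _).trans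
            (add_le_add hnear (hxx' ▸ hQ g hg))) hnear')
      _ = r ^ β * (C + c₁ * K * (1 + 2 ^ β)) := by
          rw [Real.mul_rpow zero_le_two hr.le]
          ring
  exact le_of_mul_le_mul_left hkey (by positivity)

end KeyEstimate

section KernelClasses

variable {α : Type*} {X Y D : Set α} {β : ℝ}

lemma supNormOn_nonneg {f : α → ℂ} (hf : BoundedOnSet D f) {x : α} (hx : x ∈ D) :
    0 ≤ supNormOn D f :=
  (norm_nonneg _).trans (le_csSup hf ⟨x, hx, rfl⟩)

variable [MetricSpace α]

lemma IsHolderOn.norm_sub_le {f : α → ℂ} (hf : IsHolderOn D β f) {x y : α} (hx : x ∈ D)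
    (hy : y ∈ D) (hxy : x ≠ y) : ‖f x - f y‖ ≤ holderSemi D β f * dist x y ^ β := by
  rw [← div_le_iff₀ (Real.rpow_pos_of_pos (dist_pos.2 hxy) β)]
  exact le_csSup hf ⟨x, hx, y, hy, hxy, rfl⟩

lemma mem_upperBounds_holderSet {g : α → ℂ} {C : ℝ} (hC : 0 ≤ C)
    (hg : ∀ u ∈ D, ∀ v ∈ D, ‖g u - g v‖ ≤ C * dist u v ^ β) :
    C ∈ upperBounds (holderSet D β g) := by
  rintro _ ⟨u, hu, v, hv, -, rfl⟩
  exact div_le_of_le_mul₀ (by positivity) hC (hg u hu v hv)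

variable [MeasurableSpace α] {ν : Measure α}

lemma MemK.exists_ae_norm_le {Z : α → α → ℂ} {s₁ s₂ s₃ : ℝ} (hZ : MemK X Y s₁ s₂ s₃ Z)
    (hY : MeasurableSet Y) :
    ∃ c₁, 0 ≤ c₁ ∧ ∀ x ∈ X, ∀ᵐ y ∂ν.restrict Y, y ≠ x → ‖Z x y‖ ≤ c₁ * dist x y ^ (-s₁) := by
  obtain ⟨c₁, hc₁⟩ := hZ.2.1
  refine ⟨max c₁ 0, le_max_right _ _, fun x hx => ?_⟩
  refine (ae_restrict_iff' hY).2 (ae_of_all _ fun y hy hyx => ?_)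
  have hd := dist_pos.2 hyx.symm
  rw [Real.rpow_neg hd.le, ← div_eq_mul_inv, le_div_iff₀ (by positivity), mul_comm]
  exact (hc₁ ⟨x, hx, y, hy, hyx.symm, rfl⟩).trans (le_max_left _ _)

lemma MemK.aestronglyMeasurable [OpensMeasurableSpace α] {Z : α → α → ℂ} {s₁ s₂ s₃ : ℝ}
    (hZ : MemK X Y s₁ s₂ s₃ Z) (hY : MeasurableSet Y) {x : α} (hx : x ∈ X)
    (hx₀ : ν.restrict Y {x} = 0) : AEStronglyMeasurable (Z x) (ν.restrict Y) := by
  have hcont : ContinuousOn (Z x) (Y \ {x}) :=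
    hZ.1.comp (Continuous.prodMk_right x).continuousOn fun y hy =>
      ⟨⟨hx, hy.1⟩, fun h => hy.2 h.symm⟩
  have := hcont.aestronglyMeasurable (μ := ν) (hY.diff (measurableSet_singleton x))
  rwa [sdiff_eq_compl_inter, ← Measure.restrict_restrict (measurableSet_singleton x).compl,
    Measure.restrict_eq_self_of_ae_mem (s := {x}ᶜ) (compl_mem_ae_iff.2 hx₀)] at this

lemma UpperAhlforsRegular.exists_restrict_measure_ball_le [OpensMeasurableSpace α] {υ : ℝ}
    (h : UpperAhlforsRegular ν X Y υ) :
    ∃ c δ : ℝ, 0 ≤ c ∧ 0 < δ ∧ ∀ x ∈ X, ∀ ρ, 0 < ρ → ρ ≤ δ →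
      ν.restrict Y (ball x ρ) ≤ ENNReal.ofReal (c * ρ ^ υ) := by
  obtain ⟨c, hc, r₀, hr₀, h⟩ := h
  obtain ⟨δ, -, hδ, hδr₀⟩ := ENNReal.lt_iff_exists_real_btwn.1 hr₀
  refine ⟨c, δ, hc.le, ENNReal.ofReal_pos.1 hδ, fun x hx ρ hρ hρδ => ?_⟩
  rw [Measure.restrict_apply measurableSet_ball]
  exact h x hx ρ hρ ((ENNReal.ofReal_le_ofReal hρδ).trans_lt hδr₀)

lemma exists_norm_Qop_sub_le {Z : α → α → ℂ}
    (hQ : ∃ C : ℝ, 0 < C ∧ ∀ g : α → ℂ, IsHolderOn (X ∪ Y) β g →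
      BoundedOnSet X (Qop ν Y Z g) ∧ IsHolderOn X β (Qop ν Y Z g) ∧
      supNormOn X (Qop ν Y Z g) + holderSemi X β (Qop ν Y Z g) ≤ C * holderSemi (X ∪ Y) β g) :
    ∃ C, ∀ g : α → ℂ, (∀ u v, ‖g u - g v‖ ≤ dist u v ^ β) → ∀ x ∈ X, ∀ x' ∈ X, x ≠ x' →
      ‖Qop ν Y Z g x - Qop ν Y Z g x'‖ ≤ C * dist x x' ^ β := by
  obtain ⟨C, hC, hQ⟩ := hQ
  refine ⟨C, fun g hg x hx x' hx' hxx' => ?_⟩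
  have hg₁ : (1 : ℝ) ∈ upperBounds (holderSet (X ∪ Y) β g) :=
    mem_upperBounds_holderSet zero_le_one fun u _ v _ => by simpa using hg u v
  obtain ⟨hbdd, hhol, hnorm⟩ := hQ g ⟨1, hg₁⟩
  have hsemi : holderSemi X β (Qop ν Y Z g) ≤ C := by
    have hg_semi : holderSemi (X ∪ Y) β g ≤ 1 := Real.sSup_le hg₁ zero_le_one
    nlinarith [supNormOn_nonneg hbdd hx]
  exact (hhol.norm_sub_le hx hx' hxx').trans (by gcongr)

end KernelClasses

theorem stmt_9_general {M : Type*} [MetricSpace M] [MeasurableSpace M] [BorelSpace M]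
    (X Y : Set M) (ν : Measure M) (hYm : MeasurableSet Y)
    (υ β s₂ s₃ : ℝ)
    (hυ : 0 < υ) (hβ0 : 0 < β) (hβ1 : β ≤ 1)
    (hYfin : ν Y < ⊤)
    (ha : ∃ a : ℝ, 0 < a ∧ ∀ ρ : ℝ, 0 < ρ → ρ < a → ∀ x' ∈ X, ∃ x'' ∈ X, dist x' x'' = ρ)
    (hreg : UpperAhlforsRegular ν X Y υ)
    (Z : M → M → ℂ) (hZ : MemK X Y υ s₂ s₃ Z)
    (hQ : ∃ C : ℝ, 0 < C ∧ ∀ g : M → ℂ, IsHolderOn (X ∪ Y) β g →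
      BoundedOnSet X (Qop ν Y Z g) ∧
      IsHolderOn X β (Qop ν Y Z g) ∧
      supNormOn X (Qop ν Y Z g) + holderSemi X β (Qop ν Y Z g) ≤
        C * holderSemi (X ∪ Y) β g) :
    BddAbove (maxFunSet ν X Y Z) := by
  obtain ⟨c₁, hc₁, hZbd⟩ := hZ.exists_ae_norm_le (ν := ν) hYm
  obtain ⟨c, δ, hc, hδ, hμ⟩ := hreg.exists_restrict_measure_ball_le
  obtain ⟨C, hC⟩ := exists_norm_Qop_sub_le hQ
  obtain ⟨a, ha, hX⟩ := ha
  have : IsFiniteMeasure (ν.restrict Y) := isFiniteMeasure_restrict.2 hYfin.ne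
  have hZm : ∀ x ∈ X, AEStronglyMeasurable (Z x) (ν.restrict Y) := fun x hx =>
    hZ.aestronglyMeasurable hYm hx (measure_singleton_eq_zero_of_measure_ball_le hυ hδ (hμ x hx))
  set K := 2 ^ υ * c * (1 - (2 ^ β)⁻¹)⁻¹
  have hK : 0 ≤ K := mul_nonneg (by positivity)
    (inv_nonneg.2 (sub_nonneg.2 (inv_le_one_of_one_le₀ (Real.one_le_rpow one_le_two hβ0.le))))
  have hloc := fun x hx R hR (hRδ : R ≤ δ) => lintegral_ball_dist_rpow_le hc hυ hβ0 hR
    fun ρ hρ hρR => hμ x hx ρ hρ (hρR.trans hRδ)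
  have hfar := fun x hx ρ r (hρ : 0 < ρ) (hρr : ρ ≤ r) =>
    integrableOn_compl_ball_and_norm_setIntegral_le hc₁ hυ.le hρ hρr (hZm x hx) (hZbd x hx)
  set ρ := min a (δ / 2)
  have hρ : 0 < ρ := lt_min ha (half_pos hδ)
  refine ⟨max (C + c₁ * K * (1 + 2 ^ β)) (c₁ * ρ ^ (-υ) * (ν.restrict Y).real univ), ?_⟩
  rintro _ ⟨x, hx, r, hr, rfl⟩
  rw [sdiff_eq_compl_inter, ← Measure.restrict_restrict measurableSet_ball.compl]
  rcases lt_or_ge r ρ with hrρ | hρr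
  · obtain ⟨x', hx', hxx'⟩ := hX r hr (hrρ.trans_le (min_le_left _ _)) x hx
    refine le_max_of_le_left (norm_setIntegral_compl_ball_le hβ0 hβ1 hr ?_ hx hx' hxx' hc₁ hK
      hZm hZbd hloc (hfar x hx r r hr le_rfl).1 fun g hg => hC g hg x hx x' hx' ?_)
    · linarith [hrρ.trans_le (min_le_right a (δ / 2))]
    · exact dist_pos.1 (hxx' ▸ hr)
  · exact le_max_of_le_right (hfar x hx ρ r hρ hρr).2

theorem stmt_9 {M : Type*} [MetricSpace M] [MeasurableSpace M] [BorelSpace M]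
    (X Y : Set M) (ν : Measure M) (hYm : MeasurableSet Y)
    (υ β s₂ s₃ : ℝ)
    (hυ : 0 < υ) (hβ0 : 0 < β) (hβ1 : β ≤ 1) (hs₂ : β ≤ s₂) (hs₃0 : 0 < s₃) (hs₃1 : s₃ ≤ 1)
    (hball : ∀ x ∈ X, ∀ r : ℝ, 0 < r → ν (ball x r ∩ Y) < ⊤)
    (hYfin : ν Y < ⊤)
    (ha : ∃ a : ℝ, 0 < a ∧ ∀ ρ : ℝ, 0 < ρ → ρ < a → ∀ x' ∈ X, ∃ x'' ∈ X, dist x' x'' = ρ)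
    (h1 : s₂ - β < υ) (h2 : β ≤ s₃)
    (hreg : UpperAhlforsRegular ν X Y υ)
    (Z : M → M → ℂ) (hZ : MemK X Y υ s₂ s₃ Z)
    (hQ : ∃ C : ℝ, 0 < C ∧ ∀ g : M → ℂ, IsHolderOn (X ∪ Y) β g →
      BoundedOnSet X (Qop ν Y Z g) ∧
      IsHolderOn X β (Qop ν Y Z g) ∧
      supNormOn X (Qop ν Y Z g) + holderSemi X β (Qop ν Y Z g) ≤
        C * holderSemi (X ∪ Y) β g) :
    BddAbove (maxFunSet ν X Y Z) :=
  stmt_9_general X Y ν hYm υ β s₂ s₃ hυ hβ0 hβ1 hYfin ha hreg Z hZ hQ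
end
end
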